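/- arXiv:2202.07989 — 6 statements merged into one kernel-verified Lean document; each statement's English description precedes it below -/
import Mathlib

section
/- For the 1D single-component Euler equations with stiffened EOS, the entropy potential flux ψ = φ·v equals V^T F − q, where F = (ρ₁v, ρ₁v² + p, (E+p)v)^T with p = ρ₁R₁T − p_{∞,1}, q = −ρ₁S₁v, and V, φ, E, S₁ are as in the stiffened-EOS entropy framework. -/
theorem entropy_potential_flux_identity_1d_general (cv Γ pinf ρ T v : ℝ)
    (hT : 0 < T) :
    let R := cv * (Γ - 1)
    let S := cv * Real.log T - R * Real.log ρ
    let p := ρ * R * T - pinf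
    let E := cv * ρ * T + pinf + ρ * v ^ 2 / 2
    let q := -(ρ * S) * v
    let φ := R * ρ - pinf / T
    -- V · F − q = ψ = φ v
    ((-S - v ^ 2 / (2 * T) + cv * Γ) * (ρ * v) + (v / T) * (ρ * v ^ 2 + p)
        + (-(1 / T)) * ((E + p) * v)) - q = φ * v := by
  dsimp only
  field_simp
  ring

/-- Entropy potential flux identity `ψ = φ·v = Vᵀ F − q` for the 1D
single-component Euler equations with the stiffened EOS. -/
theorem entropy_potential_flux_identity_1d (cv Γ pinf ρ T v : ℝ)
    (hcv : 0 < cv) (hΓ : 1 < Γ) (hρ : 0 < ρ) (hT : 0 < T) :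
    let R := cv * (Γ - 1)
    let S := cv * Real.log T - R * Real.log ρ
    let p := ρ * R * T - pinf
    let E := cv * ρ * T + pinf + ρ * v ^ 2 / 2
    let q := -(ρ * S) * v
    let φ := R * ρ - pinf / T
    -- V · F − q = ψ = φ v
    ((-S - v ^ 2 / (2 * T) + cv * Γ) * (ρ * v) + (v / T) * (ρ * v ^ 2 + p)
        + (-(1 / T)) * ((E + p) * v)) - q = φ * v :=
  entropy_potential_flux_identity_1d_general cv Γ pinf ρ T v hT
end

section
/- For the stiffened-gas Euler equations in 1D without velocity, the mathematical entropy η(ρ₁, T) = −ρ₁(c_{v,1} ln T − R₁ ln ρ₁), written as a function of the conserved variables, i.e., η̃(ρ₁, ε) = −ρ₁(c_{v,1} ln((ε − p_{∞,1})/(c_{v,1}ρ₁)) − R₁ ln ρ₁) with internal energy ε = c_{v,1}ρ₁T + p_{∞,1}, is convex on the domain ρ₁ > 0, ε > p_{∞,1}. -/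
open Real

lemma entropy_domain_convex (c : ℝ) :
    Convex ℝ {q : ℝ × ℝ | 0 < q.1 ∧ c < q.2} := by
  have h : {q : ℝ × ℝ | 0 < q.1 ∧ c < q.2} = Set.Ioi 0 ×ˢ Set.Ioi c := rfl
  rw [h]
  exact (convex_Ioi 0).prod (convex_Ioi c)

/-- Log-sum / relative entropy convexity, shifted: `(ρ, ε) ↦ ρ log (ρ / (ε - c))`. -/
lemma kl_convexOn (c : ℝ) :
    ConvexOn ℝ {q : ℝ × ℝ | 0 < q.1 ∧ c < q.2}
      (fun q : ℝ × ℝ => q.1 * Real.log (q.1 / (q.2 - c))) := by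
  refine ⟨entropy_domain_convex c, ?_⟩
  rintro ⟨x₁, e₁⟩ ⟨hx₁, he₁⟩ ⟨x₂, e₂⟩ ⟨hx₂, he₂⟩ a b ha hb hab
  simp only [Prod.smul_mk, Prod.mk_add_mk, smul_eq_mul]
  have hy₁ : (0:ℝ) < e₁ - c := sub_pos.2 he₁
  have hy₂ : (0:ℝ) < e₂ - c := sub_pos.2 he₂
  set y₁ := e₁ - c with hy₁def
  set y₂ := e₂ - c with hy₂def
  have hs : a * e₁ + b * e₂ - c = a * y₁ + b * y₂ := by
    have hc : a * c + b * c = c := by rw [← add_mul, hab, one_mul]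
    simp only [hy₁def, hy₂def]; linarith
  rw [hs]
  set s := a * y₁ + b * y₂ with hsdef
  have hspos : 0 < s := by
    rcases ha.lt_or_eq with h | h
    · have : 0 ≤ b * y₂ := mul_nonneg hb hy₂.le
      nlinarith [mul_pos h hy₁]
    · have hb1 : b = 1 := by linarith
      simp [hsdef, ← h, hb1, hy₂]
  have key := Real.convexOn_mul_log.2 (x := x₁ / y₁) (y := x₂ / y₂)
    (Set.mem_Ici.2 (div_nonneg hx₁.le hy₁.le))
    (Set.mem_Ici.2 (div_nonneg hx₂.le hy₂.le))
    (div_nonneg (mul_nonneg ha hy₁.le) hspos.le)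
    (div_nonneg (mul_nonneg hb hy₂.le) hspos.le)
    (by field_simp; exact hsdef.symm)
  simp only [smul_eq_mul] at key
  have harg : a * y₁ / s * (x₁ / y₁) + b * y₂ / s * (x₂ / y₂) = (a * x₁ + b * x₂) / s := by
    field_simp
  rw [harg] at key
  have key' := mul_le_mul_of_nonneg_left key hspos.le
  set l0 := Real.log ((a * x₁ + b * x₂) / s)
  set l1 := Real.log (x₁ / y₁)
  set l2 := Real.log (x₂ / y₂)
  have e1 : s * ((a * x₁ + b * x₂) / s * l0) = (a * x₁ + b * x₂) * l0 := by
    field_simp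
  have e2 : s * (a * y₁ / s * (x₁ / y₁ * l1) + b * y₂ / s * (x₂ / y₂ * l2))
      = a * (x₁ * l1) + b * (x₂ * l2) := by
    field_simp
  rw [e1, e2] at key'
  exact key'

/-- Convexity of `ρ ↦ ρ log ρ` viewed on the 2D domain. -/
lemma rho_log_rho_convexOn (c : ℝ) :
    ConvexOn ℝ {q : ℝ × ℝ | 0 < q.1 ∧ c < q.2}
      (fun q : ℝ × ℝ => q.1 * Real.log q.1) := by
  refine ⟨entropy_domain_convex c, ?_⟩
  rintro ⟨x₁, e₁⟩ ⟨hx₁, he₁⟩ ⟨x₂, e₂⟩ ⟨hx₂, he₂⟩ a b ha hb hab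
  simp only [Prod.smul_mk, Prod.mk_add_mk, smul_eq_mul]
  have := Real.convexOn_mul_log.2 (x := x₁) (y := x₂)
    (Set.mem_Ici.2 hx₁.le) (Set.mem_Ici.2 hx₂.le) ha hb hab
  simpa using this

/-- Convexity of a linear function `ρ ↦ k ρ` on the 2D domain. -/
lemma lin_convexOn (c k : ℝ) :
    ConvexOn ℝ {q : ℝ × ℝ | 0 < q.1 ∧ c < q.2}
      (fun q : ℝ × ℝ => k * q.1) := by
  refine ⟨entropy_domain_convex c, ?_⟩
  rintro ⟨x₁, e₁⟩ _ ⟨x₂, e₂⟩ _ a b ha hb hab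
  simp only [Prod.smul_mk, Prod.mk_add_mk, smul_eq_mul]
  exact le_of_eq (by ring)

/-- The mathematical entropy `η̃(ρ, ε) = −ρ (c_v ln((ε − p∞)/(c_v ρ)) − R ln ρ)`
is convex on the domain `{ρ > 0, ε > p∞}`. -/
theorem entropy_convex (cv Γ pinf : ℝ) (hcv : 0 < cv) (hΓ : 1 < Γ) :
    let R := cv * (Γ - 1)
    ConvexOn ℝ {q : ℝ × ℝ | 0 < q.1 ∧ pinf < q.2}
      (fun q : ℝ × ℝ =>
        -(q.1 * (cv * Real.log ((q.2 - pinf) / (cv * q.1)) - R * Real.log q.1))) := by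
  intro R
  have hR : R = cv * (Γ - 1) := rfl
  set S := {q : ℝ × ℝ | 0 < q.1 ∧ pinf < q.2} with hS
  set g : ℝ × ℝ → ℝ := fun q =>
    cv * ((Γ - 1) * (q.1 * Real.log q.1) + q.1 * Real.log (q.1 / (q.2 - pinf))
      + Real.log cv * q.1) with hgdef
  have hg : ConvexOn ℝ S g := by
    have h1 := (rho_log_rho_convexOn pinf).smul (c := Γ - 1) (by linarith)
    have h2 := (h1.add (kl_convexOn pinf)).add (lin_convexOn pinf (Real.log cv))
    have h3 := h2.smul (c := cv) hcv.le
    convert h3 using 2 with q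
    · rfl
    · rfl
    · rw [hgdef]; simp only [Pi.add_apply, smul_eq_mul]
  have heq : ∀ q ∈ S,
      -(q.1 * (cv * Real.log ((q.2 - pinf) / (cv * q.1)) - R * Real.log q.1)) = g q := by
    rintro ⟨ρ, ε⟩ ⟨hρ, hε⟩
    have hεp : (0:ℝ) < ε - pinf := sub_pos.2 hε
    have l1 : Real.log ((ε - pinf) / (cv * ρ))
        = Real.log (ε - pinf) - (Real.log cv + Real.log ρ) := by
      rw [Real.log_div hεp.ne' (by positivity), Real.log_mul hcv.ne' hρ.ne']
    have l2 : Real.log (ρ / (ε - pinf)) = Real.log ρ - Real.log (ε - pinf) :=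
      Real.log_div hρ.ne' hεp.ne'
    simp only [hgdef, hR, l1, l2]
    ring
  refine ⟨hg.1, fun x hx y hy a b ha hb hab => ?_⟩
  have hmem : a • x + b • y ∈ S := hg.1 hx hy ha hb hab
  simp only [smul_eq_mul]
  rw [heq _ hx, heq _ hy, heq _ hmem]
  exact hg.2 hx hy ha hb hab
end

section
/- With the jump decomposition for the parameter vector z = (ρ₁, v, 1/T) in 1D (d=1, N=1), the jump of the first entropy variable satisfies [[V₁]] = c_{v,1}[[z₃]]/{{z₃}}^ln + R₁[[z₁]]/{{z₁}}^ln − {{z₃}}{{z₂}}[[z₂]] − (1/2){{z₂²}}[[z₃]], where V₁ = −S₁ − v²/(2T) + c_{v,1}Γ₁ and S₁ = c_{v,1} ln T − R₁ ln ρ₁. -/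
lemma div_div_cancel_aux (a c : ℝ) (ha : a ≠ 0) : a / (a / c) = c := by
  rw [div_div_eq_mul_div, mul_comm, mul_div_assoc, div_self ha, mul_one]

/-- Jump decomposition of the first entropy variable in terms of the parameter
vector `z = (ρ₁, v, 1/T)` (1D, single component). -/
theorem jump_V1_decomposition (cv Γ : ℝ) (hcv : 0 < cv) (hΓ : 1 < Γ)
    (ρl ρr Tl Tr vl vr : ℝ) (hρl : 0 < ρl) (hρr : 0 < ρr)
    (hTl : 0 < Tl) (hTr : 0 < Tr) (hρne : ρl ≠ ρr) (hTne : Tl ≠ Tr) :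
    let R := cv * (Γ - 1)
    let V1 : ℝ → ℝ → ℝ → ℝ := fun ρ T v =>
      -(cv * Real.log T - R * Real.log ρ) - v ^ 2 / (2 * T) + cv * Γ
    let z3l := 1 / Tl
    let z3r := 1 / Tr
    -- logarithmic means of z₁ = ρ and z₃ = 1/T
    let lnρ := (ρr - ρl) / (Real.log ρr - Real.log ρl)
    let lnz3 := (z3r - z3l) / (Real.log z3r - Real.log z3l)
    V1 ρr Tr vr - V1 ρl Tl vl =
      cv * ((z3r - z3l) / lnz3) + R * ((ρr - ρl) / lnρ)
        - ((z3l + z3r) / 2) * ((vl + vr) / 2) * (vr - vl)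
        - (1 / 2) * ((vl ^ 2 + vr ^ 2) / 2) * (z3r - z3l) := by
  intro R V1 z3l z3r lnρ lnz3
  have hTl' : Tl ≠ 0 := ne_of_gt hTl
  have hTr' : Tr ≠ 0 := ne_of_gt hTr
  have hz3ne : z3r - z3l ≠ 0 := by
    simp only [z3l, z3r]
    intro h
    apply hTne
    have : (1:ℝ)/Tr = 1/Tl := by linarith [sub_eq_zero.mp h]
    field_simp at this
    linarith
  have hρne' : ρr - ρl ≠ 0 := sub_ne_zero.mpr (Ne.symm hρne)
  have h1 : (ρr - ρl) / lnρ = Real.log ρr - Real.log ρl :=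
    div_div_cancel_aux _ _ hρne'
  have h2 : (z3r - z3l) / lnz3 = Real.log z3r - Real.log z3l :=
    div_div_cancel_aux _ _ hz3ne
  rw [h1, h2]
  have hl3l : Real.log z3l = -Real.log Tl := by
    simp [z3l, Real.log_div, Real.log_one]
  have hl3r : Real.log z3r = -Real.log Tr := by
    simp [z3r, Real.log_div, Real.log_one]
  simp only [V1, z3l, z3r, hl3l, hl3r]
  field_simp
  ring
end

section
/- The candidate entropy-conservative state vector Ũ for the 1D single-component stiffened-gas Euler equations, Ũ = ({{z₁}}^ln, {{z₂}}{{z₁}}^ln, (c_{v,1}/{{z₃}}^ln − (1/2){{z₂²}} + {{z₂}}²){{z₁}}^ln + p_{∞,1}) with z = (ρ₁, v, 1/T), satisfies the EC condition [[V]]^T Ũ = [[φ]], where V = (−S₁ − v²/(2T) + c_{v,1}Γ₁, v/T, −1/T) and φ = R₁ρ₁ − p_{∞,1}/T. -/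
set_option maxHeartbeats 2000000


/-- The candidate EC state vector `Ũ` for the 1D single-component stiffened-gas
Euler equations satisfies `[[V]]ᵀ Ũ = [[φ]]`. -/
theorem EC_state_condition (cv Γ pinf : ℝ) (hcv : 0 < cv) (hΓ : 1 < Γ)
    (ρl ρr Tl Tr vl vr : ℝ) (hρl : 0 < ρl) (hρr : 0 < ρr)
    (hTl : 0 < Tl) (hTr : 0 < Tr) (hρne : ρl ≠ ρr) (hTne : Tl ≠ Tr) :
    let R := cv * (Γ - 1)
    let S : ℝ → ℝ → ℝ := fun ρ T => cv * Real.log T - R * Real.log ρ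
    let V1 : ℝ → ℝ → ℝ → ℝ := fun ρ T v =>
      -S ρ T - v ^ 2 / (2 * T) + cv * Γ
    let V2 : ℝ → ℝ → ℝ := fun T v => v / T
    let V3 : ℝ → ℝ := fun T => -(1 / T)
    let φ : ℝ → ℝ → ℝ := fun ρ T => R * ρ - pinf / T
    let z3l := 1 / Tl
    let z3r := 1 / Tr
    let lnρ := (ρr - ρl) / (Real.log ρr - Real.log ρl)
    let lnz3 := (z3r - z3l) / (Real.log z3r - Real.log z3l)
    let mv := (vl + vr) / 2
    let mv2 := (vl ^ 2 + vr ^ 2) / 2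
    let U1 := lnρ
    let U2 := mv * lnρ
    let U3 := (cv / lnz3 - (1 / 2) * mv2) * lnρ + lnρ * mv ^ 2 + pinf
    (V1 ρr Tr vr - V1 ρl Tl vl) * U1 + (V2 Tr vr - V2 Tl vl) * U2
        + (V3 Tr - V3 Tl) * U3 = φ ρr Tr - φ ρl Tl := by
  intro R S V1 V2 V3 φ z3l z3r lnρ lnz3 mv mv2 U1 U2 U3
  have hTl' : Tl ≠ 0 := ne_of_gt hTl
  have hTr' : Tr ≠ 0 := ne_of_gt hTr
  have hLρ : Real.log ρr - Real.log ρl ≠ 0 := by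
    refine sub_ne_zero.mpr (fun h => hρne ?_)
    have := Real.log_injOn_pos (Set.mem_Ioi.mpr hρr) (Set.mem_Ioi.mpr hρl) h
    exact this.symm
  have hz3ne : z3l ≠ z3r := by
    simp only [z3l, z3r]
    intro h
    exact hTne (by field_simp at h; linarith)
  have hz3l : (0:ℝ) < z3l := by positivity
  have hz3r : (0:ℝ) < z3r := by positivity
  have hLz : Real.log z3r - Real.log z3l ≠ 0 := by
    refine sub_ne_zero.mpr (fun h => hz3ne ?_)
    exact (Real.log_injOn_pos (Set.mem_Ioi.mpr hz3r) (Set.mem_Ioi.mpr hz3l) h).symm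
  have hz3sub : z3r - z3l ≠ 0 := sub_ne_zero.mpr (Ne.symm hz3ne)
  have hlnz3 : lnz3 ≠ 0 := div_ne_zero hz3sub hLz
  have hlogz3r : Real.log z3r = -Real.log Tr := by
    simp [z3r, Real.log_inv]
  have hlogz3l : Real.log z3l = -Real.log Tl := by
    simp [z3l, Real.log_inv]
  have hT : Tl - Tr ≠ 0 := sub_ne_zero.mpr hTne
  have hkey : cv / lnz3 = cv * (Real.log Tl - Real.log Tr) * (Tl * Tr) / (Tl - Tr) := by
    simp only [lnz3, z3r, z3l, hlogz3r, hlogz3l]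
    have hb1 : (1:ℝ)/Tr - 1/Tl ≠ 0 := hz3sub
    rw [div_div_eq_mul_div, div_eq_div_iff hb1 hT]
    field_simp
    ring
  simp only [U1, U2, U3, V1, V2, V3, S, φ, lnρ, mv, mv2, z3l, z3r, R, hkey]
  field_simp
  ring
end

section
/- The candidate entropy-conservative flux F̃₁ for the 1D single-component stiffened-gas Euler equations, with components F̃₁ = {{z₁}}^ln{{z₂}}, F̃₂ = {{z₂}}F̃₁ + R₁{{z₁}}/{{z₃}} − p_{∞,1}, F̃₃ = (c_{v,1}/{{z₃}}^ln − (1/2){{z₂²}})F̃₁ + {{z₂}}F̃₂ + p_{∞,1}{{z₂}} (where z = (ρ₁, v, 1/T)), satisfies the EC condition [[V]]^T F̃ = [[ψ]], where ψ = (R₁ρ₁ − p_{∞,1}/T)v. -/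
/-- The candidate EC flux `F̃₁` for the 1D single-component stiffened-gas Euler
equations satisfies `[[V]]ᵀ F̃ = [[ψ]]` with `ψ = (R₁ρ₁ − p∞/T)v`. -/
theorem EC_flux_condition (cv Γ pinf : ℝ) (hcv : 0 < cv) (hΓ : 1 < Γ)
    (ρl ρr Tl Tr vl vr : ℝ) (hρl : 0 < ρl) (hρr : 0 < ρr)
    (hTl : 0 < Tl) (hTr : 0 < Tr) (hρne : ρl ≠ ρr) (hTne : Tl ≠ Tr) :
    let R := cv * (Γ - 1)
    let S : ℝ → ℝ → ℝ := fun ρ T => cv * Real.log T - R * Real.log ρ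
    let V1 : ℝ → ℝ → ℝ → ℝ := fun ρ T v =>
      -S ρ T - v ^ 2 / (2 * T) + cv * Γ
    let V2 : ℝ → ℝ → ℝ := fun T v => v / T
    let V3 : ℝ → ℝ := fun T => -(1 / T)
    let ψ : ℝ → ℝ → ℝ → ℝ := fun ρ T v => (R * ρ - pinf / T) * v
    let z3l := 1 / Tl
    let z3r := 1 / Tr
    let lnρ := (ρr - ρl) / (Real.log ρr - Real.log ρl)
    let lnz3 := (z3r - z3l) / (Real.log z3r - Real.log z3l)
    let mρ := (ρl + ρr) / 2
    let mv := (vl + vr) / 2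
    let mv2 := (vl ^ 2 + vr ^ 2) / 2
    let mz3 := (z3l + z3r) / 2
    let F1 := lnρ * mv
    let F2 := mv * F1 + R * mρ / mz3 - pinf
    let F3 := (cv / lnz3 - (1 / 2) * mv2) * F1 + mv * F2 + pinf * mv
    (V1 ρr Tr vr - V1 ρl Tl vl) * F1 + (V2 Tr vr - V2 Tl vl) * F2
        + (V3 Tr - V3 Tl) * F3 = ψ ρr Tr vr - ψ ρl Tl vl := by
  have hTl' : Tl ≠ 0 := ne_of_gt hTl
  have hTr' : Tr ≠ 0 := ne_of_gt hTr
  have hLρ : Real.log ρr - Real.log ρl ≠ 0 := by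
    refine sub_ne_zero.mpr fun h => hρne ?_
    rw [← Real.exp_log hρl, ← Real.exp_log hρr, h]
  have hLT : Real.log Tr - Real.log Tl ≠ 0 := by
    refine sub_ne_zero.mpr fun h => hTne ?_
    rw [← Real.exp_log hTl, ← Real.exp_log hTr, h]
  have hz3 : Tr⁻¹ - Tl⁻¹ ≠ 0 := by
    refine sub_ne_zero.mpr fun h => hTne ?_
    rw [inv_eq_iff_eq_inv, inv_inv] at h
    exact h.symm
  have hmz3 : ((Tl⁻¹ + Tr⁻¹) / 2 : ℝ) ≠ 0 := by positivity
  intro R S V1 V2 V3 ψ z3l z3r lnρ lnz3 mρ mv mv2 mz3 F1 F2 F3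
  simp only [R, S, V1, V2, V3, ψ, z3l, z3r, lnρ, lnz3, mρ, mv, mv2, mz3, F1, F2, F3]
  rw [one_div Tl, one_div Tr, Real.log_inv, Real.log_inv]
  have hLT' : (-Real.log Tr - -Real.log Tl : ℝ) ≠ 0 := fun h => hLT (by linarith)
  have h1 : (ρr - ρl) / (Real.log ρr - Real.log ρl) * (Real.log ρr - Real.log ρl)
      = ρr - ρl := div_mul_cancel₀ _ hLρ
  have h2 : cv / ((Tr⁻¹ - Tl⁻¹) / (-Real.log Tr - -Real.log Tl)) * (Tr⁻¹ - Tl⁻¹)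
      = cv * (-Real.log Tr - -Real.log Tl) := by
    rw [div_div_eq_mul_div, div_mul_cancel₀ _ hz3]
  have h3 : cv * (Γ - 1) * ((ρl + ρr) / 2) / ((Tl⁻¹ + Tr⁻¹) / 2) * ((Tl⁻¹ + Tr⁻¹) / 2)
      = cv * (Γ - 1) * ((ρl + ρr) / 2) := div_mul_cancel₀ _ hmz3
  have hTlinv : Tl * Tl⁻¹ = 1 := mul_inv_cancel₀ hTl'
  have hTrinv : Tr * Tr⁻¹ = 1 := mul_inv_cancel₀ hTr'
  linear_combination (cv * (Γ - 1) * ((vl + vr) / 2)) * h1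
    - ((ρr - ρl) / (Real.log ρr - Real.log ρl) * ((vl + vr) / 2)) * h2
    + (vr - vl) * h3
end

section
/- If the dissipation term in the ES flux is of the form −(1/2) R |Λ| Y [[W]]^WENO where |Λ| is a nonnegative diagonal matrix, Y is a diagonal 0/1 matrix enforcing the sign property sign(Y_{mm}[[W_m]]^WENO) sign([[W_m]]) ≥ 0 componentwise, and W = R^T V are the scaled entropy variables, then the extra entropy production of the dissipation term is nonpositive: [[V]]^T (−(1/2) R|Λ|Y [[W]]^WENO) ≤ 0. -/
open Matrix

/-- The dissipation term `−(1/2) R |Λ| Y [[W]]^WENO` with the sign property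
produces nonpositive entropy production:
`[[V]]ᵀ R |Λ| Y [[W]]^WENO ≥ 0`. -/
theorem dissipation_entropy_production_nonneg
    (n : ℕ) (R : Matrix (Fin n) (Fin n) ℝ) (hR : IsUnit R)
    (Λ Y : Fin n → ℝ) (hΛ : ∀ m, 0 ≤ Λ m) (hY : ∀ m, Y m = 0 ∨ Y m = 1)
    (Vl Vr : Fin n → ℝ) (WWENO : Fin n → ℝ)
    (hsign : ∀ m, Y m = 1 →
      0 < WWENO m * ((R.transpose.mulVec Vr) m - (R.transpose.mulVec Vl) m)) :
    0 ≤ (Vr - Vl) ⬝ᵥ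
      (R * Matrix.diagonal Λ * Matrix.diagonal Y).mulVec WWENO := by
  have key : (Vr - Vl) ⬝ᵥ (R * Matrix.diagonal Λ * Matrix.diagonal Y).mulVec WWENO
      = ∑ m, Λ m * Y m * WWENO m *
        ((R.transpose.mulVec Vr) m - (R.transpose.mulVec Vl) m) := by
    simp [dotProduct, mulVec, Matrix.mul_apply, Matrix.diagonal, Finset.mul_sum,
      Finset.sum_mul, mulVec, transpose_apply, sub_mul, mul_sub]
    congr 1 <;> rw [Finset.sum_comm] <;>
      exact Finset.sum_congr rfl fun i _ => Finset.sum_congr rfl fun j _ => by ring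
  rw [key]
  apply Finset.sum_nonneg
  intro m _
  rcases hY m with h | h
  · simp [h]
  · have := hsign m h
    have := hΛ m
    rw [h]
    nlinarith
end
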